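/- arXiv:1712.07402 — 8 statements merged into one kernel-verified Lean document; each statement's English description precedes it below -/
import Mathlib

section
/- Let n ≥ 1 be an integer, A a real number, and I ⊆ (0,∞) a nonempty open interval. A twice differentiable function ψ : I → ℝ satisfies the ordinary differential equation n(n−1)/y − (d²/dy²)(y^{n−1} ψ(y)) / y^{n−1} = −A n(n+1) for all y ∈ I if and only if there exist real constants B and C such that ψ(y) = A y² + y + B y^{2−n} + C y^{1−n} for all y ∈ I. -/
lemma const_on_Ioo {a b : ℝ} {f : ℝ → ℝ}
    (hf : ∀ y ∈ Set.Ioo a b, HasDerivAt f 0 y) {x y : ℝ}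
    (hx : x ∈ Set.Ioo a b) (hy : y ∈ Set.Ioo a b) : f x = f y := by
  apply (convex_Ioo a b).is_const_of_fderivWithin_eq_zero
    (fun z hz => ((hf z hz).differentiableAt).differentiableWithinAt) _ hx hy
  intro z hz
  rw [fderivWithin_of_isOpen isOpen_Ioo hz, (hf z hz).hasFDerivAt.fderiv]
  ext
  simp

lemma powdiv (m : ℕ) {y : ℝ} (hy : y ≠ 0) :
    (m : ℝ) * y ^ (m - 1) = (m : ℝ) * y ^ m / y := by
  cases m with
  | zero => simp
  | succ k =>
    rw [pow_succ, Nat.add_sub_cancel]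
    field_simp

lemma rhs_mul (m : ℕ) {y : ℝ} (hy : y ≠ 0) (A B C : ℝ) :
    y ^ m * (A * y ^ 2 + y + B * y ^ ((1 : ℤ) - (m : ℤ)) + C * y ^ (-(m : ℤ)))
      = A * y ^ (m + 2) + y ^ (m + 1) + B * y + C := by
  have e1 : y ^ m * y ^ ((1 : ℤ) - (m : ℤ)) = y := by
    rw [← zpow_natCast y m, ← zpow_add₀ hy]
    norm_num
  have e2 : y ^ m * y ^ (-(m : ℤ)) = 1 := by
    rw [← zpow_natCast y m, ← zpow_add₀ hy]
    simp
  linear_combination B * e1 + C * e2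

/-- A twice differentiable function `ψ` on a nonempty open interval
`I ⊆ (0,∞)` satisfies `n(n−1)/y − (y^{n−1} ψ(y))'' / y^{n−1} = −A n(n+1)` on `I`
iff `ψ(y) = A y² + y + B y^{2−n} + C y^{1−n}` on `I` for some constants `B`, `C`. -/
theorem stmt_0 (n : ℕ) (hn : 1 ≤ n) (A : ℝ) (I : Set ℝ)
    (hI : I.Nonempty) (hIab : ∃ a b : ℝ, I = Set.Ioo a b)
    (hIpos : I ⊆ Set.Ioi (0 : ℝ))
    (ψ : ℝ → ℝ)
    (hψ₁ : ∀ y ∈ I, DifferentiableAt ℝ ψ y)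
    (hψ₂ : ∀ y ∈ I, DifferentiableAt ℝ (deriv ψ) y) :
    (∀ y ∈ I,
        (n : ℝ) * ((n : ℝ) - 1) / y
          - deriv (deriv (fun y : ℝ => y ^ (n - 1) * ψ y)) y / y ^ (n - 1)
          = -A * (n : ℝ) * ((n : ℝ) + 1))
    ↔ ∃ B C : ℝ, ∀ y ∈ I,
        ψ y = A * y ^ 2 + y + B * y ^ ((2 : ℤ) - (n : ℤ)) + C * y ^ ((1 : ℤ) - (n : ℤ)) := by
  obtain ⟨m, rfl⟩ : ∃ m, n = m + 1 := ⟨n - 1, (Nat.succ_pred_eq_of_pos hn).symm⟩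
  obtain ⟨a, b, rfl⟩ := hIab
  have hop : IsOpen (Set.Ioo a b) := isOpen_Ioo
  simp only [Nat.add_sub_cancel]
  have hpos : ∀ y ∈ Set.Ioo a b, (0:ℝ) < y := fun y hy => hIpos hy
  have hexp1 : (2 : ℤ) - ((m + 1 : ℕ) : ℤ) = 1 - (m : ℤ) := by push_cast; ring
  have hexp2 : (1 : ℤ) - ((m + 1 : ℕ) : ℤ) = -(m : ℤ) := by push_cast; ring
  set F : ℝ → ℝ := fun y => y ^ m * ψ y with hFdef
  set G : ℝ → ℝ := fun y => A * y ^ (m + 2) + y ^ (m + 1) with hGdef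
  set D : ℝ → ℝ := fun y => A * (((m + 2 : ℕ) : ℝ) * y ^ (m + 1)) + ((m + 1 : ℕ) : ℝ) * y ^ m
    with hDdef
  set E : ℝ → ℝ := fun y =>
      A * (((m + 2 : ℕ) : ℝ) * (((m + 1 : ℕ) : ℝ) * y ^ m))
        + ((m + 1 : ℕ) : ℝ) * (((m : ℕ) : ℝ) * y ^ (m - 1)) with hEdef
  have hG : ∀ y : ℝ, HasDerivAt G (D y) y := fun y =>
    ((hasDerivAt_pow (m + 2) y).const_mul A).add (hasDerivAt_pow (m + 1) y)
  have hD : ∀ y : ℝ, HasDerivAt D (E y) y := fun y =>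
    (((hasDerivAt_pow (m + 1) y).const_mul ((m + 2 : ℕ) : ℝ)).const_mul A).add
      ((hasDerivAt_pow m y).const_mul ((m + 1 : ℕ) : ℝ))
  have hGD : deriv G = D := funext fun y => (hG y).deriv
  have hF : ∀ y ∈ Set.Ioo a b,
      HasDerivAt F (((m : ℕ) : ℝ) * y ^ (m - 1) * ψ y + y ^ m * deriv ψ y) y :=
    fun y hy => (hasDerivAt_pow m y).mul (hψ₁ y hy).hasDerivAt
  constructor
  · intro hODE
    -- second derivative of F is E on I
    have hsecond : ∀ y ∈ Set.Ioo a b, deriv (deriv F) y = E y := by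
      intro y hy
      have hy0 : y ≠ 0 := (hpos y hy).ne'
      have hym : y ^ m ≠ 0 := pow_ne_zero _ hy0
      have h := hODE y hy
      have h2 : deriv (deriv F) y
          = (((m+1:ℕ):ℝ) * (((m+1:ℕ):ℝ) - 1) / y + A * ((m+1:ℕ):ℝ) * (((m+1:ℕ):ℝ) + 1)) * y ^ m := by
        field_simp at h ⊢
        linarith
      rw [h2, hEdef]
      have hp := powdiv m hy0
      push_cast
      push_cast at hp
      rw [hp]
      field_simp
      ring
    -- deriv F is differentiable on I
    have hFd2 : ∀ y ∈ Set.Ioo a b, DifferentiableAt ℝ (deriv F) y := by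
      intro y hy
      have hev : deriv F =ᶠ[nhds y]
          fun x => ((m : ℕ) : ℝ) * x ^ (m - 1) * ψ x + x ^ m * deriv ψ x :=
        Filter.eventuallyEq_of_mem (hop.mem_nhds hy) fun x hx => (hF x hx).deriv
      rw [hev.differentiableAt_iff]
      exact (((differentiableAt_pow (m-1)).const_mul _).mul (hψ₁ y hy)).add
        ((differentiableAt_pow m).mul (hψ₂ y hy))
    have hh1 : ∀ y ∈ Set.Ioo a b, HasDerivAt (fun x => deriv F x - deriv G x) 0 y := by
      intro y hy
      have h0 := ((hFd2 y hy).hasDerivAt).sub (hGD ▸ hD y)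
      rwa [hsecond y hy, sub_self] at h0
    obtain ⟨y₀, hy₀⟩ := hI
    set B : ℝ := deriv F y₀ - deriv G y₀ with hBdef
    have hB : ∀ y ∈ Set.Ioo a b, deriv F y = deriv G y + B := by
      intro y hy
      have := const_on_Ioo hh1 hy hy₀
      linarith
    have hh2 : ∀ y ∈ Set.Ioo a b, HasDerivAt (fun x => F x - G x - B * x) 0 y := by
      intro y hy
      have h0 := ((hF y hy).sub (hG y)).sub ((hasDerivAt_id y).const_mul B)
      have e : ((m : ℕ) : ℝ) * y ^ (m - 1) * ψ y + y ^ m * deriv ψ y - D y - B * 1 = 0 := by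
        have h1 : deriv F y = ((m : ℕ) : ℝ) * y ^ (m - 1) * ψ y + y ^ m * deriv ψ y :=
          (hF y hy).deriv
        have h2 : deriv G y = D y := congrFun hGD y
        rw [← h1, ← h2]
        have := hB y hy
        linarith
      rwa [e] at h0
    set C : ℝ := F y₀ - G y₀ - B * y₀ with hCdef
    have hC : ∀ y ∈ Set.Ioo a b, F y = G y + B * y + C := by
      intro y hy
      have := const_on_Ioo hh2 hy hy₀
      linarith
    refine ⟨B, C, fun y hy => ?_⟩
    have hy0 : y ≠ 0 := (hpos y hy).ne'
    have hym : y ^ m ≠ 0 := pow_ne_zero _ hy0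
    rw [hexp1, hexp2]
    apply mul_left_cancel₀ hym
    rw [rhs_mul m hy0 A B C]
    have := hC y hy
    rw [hGdef] at this
    simp only at this
    calc y ^ m * ψ y = F y := rfl
      _ = A * y ^ (m + 2) + y ^ (m + 1) + B * y + C := by linarith
  · rintro ⟨B, C, hBC⟩
    intro y hy
    have hy0 : y ≠ 0 := (hpos y hy).ne'
    have hym : y ^ m ≠ 0 := pow_ne_zero _ hy0
    set N : ℝ → ℝ := fun x => A * x ^ (m + 2) + x ^ (m + 1) + B * x + C with hNdef
    have hFN : ∀ x ∈ Set.Ioo a b, F x = N x := by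
      intro x hx
      have hx0 : x ≠ 0 := (hpos x hx).ne'
      have h := hBC x hx
      rw [hexp1, hexp2] at h
      rw [hFdef]
      simp only
      rw [h, rhs_mul m hx0 A B C, hNdef]
    have hN : ∀ x : ℝ, HasDerivAt N (D x + B * 1) x := fun x =>
      ((hG x).add ((hasDerivAt_id x).const_mul B)).add_const C
    have hND : deriv N = fun x => D x + B * 1 := funext fun x => (hN x).deriv
    have hdFN : ∀ x ∈ Set.Ioo a b, deriv F x = deriv N x := fun x hx =>
      Filter.EventuallyEq.deriv_eq (Filter.eventuallyEq_of_mem (hop.mem_nhds hx) hFN)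
    have hdd : deriv (deriv F) y = deriv (deriv N) y :=
      Filter.EventuallyEq.deriv_eq (Filter.eventuallyEq_of_mem (hop.mem_nhds hy) hdFN)
    have hddN : deriv (deriv N) y = E y := by
      rw [hND]
      exact ((hD y).add_const (B * 1)).deriv
    rw [hdd, hddN, hEdef]
    have hp := powdiv m hy0
    push_cast
    push_cast at hp
    rw [hp]
    field_simp
    ring
end

section
/- Let n ≥ 1 be an integer and A, B, C, K real numbers. The identity (n−1)·( 2BC n² (n+1) y^{−2n−1} + C² n (n+1)(n+2) y^{−2(n+1)} + B² n (n+1)(n−2) y^{−2n} + A² n (n+1)(3n+2) ) = 24K holds for all y in some nonempty open interval I ⊆ (0,∞) if and only if: (i) when n = 1, K = 0 (with A, B, C arbitrary); (ii) when n = 2, C = 0 and K = 2A²; (iii) when n ≥ 3, B = C = 0 and K = A² n (n+1)(n−1)(3n+2)/24. -/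
private lemma stmt1_aux (m : ℕ) (hm : 3 ≤ m) (u v w x : ℝ)
    (h : (Polynomial.C u + Polynomial.C v * Polynomial.X
          + Polynomial.C w * Polynomial.X^2 + Polynomial.C x * Polynomial.X^m) = 0) :
    u = 0 ∧ v = 0 ∧ w = 0 ∧ x = 0 := by
  have hcoeff := Polynomial.ext_iff.mp h
  have h0 := hcoeff 0
  have h1 := hcoeff 1
  have hw := hcoeff 2
  have hx := hcoeff m
  simp [Polynomial.coeff_X_pow, Polynomial.coeff_C_mul, Polynomial.coeff_C, Polynomial.coeff_X,
    (show ¬(0 = m) by omega)] at h0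
  simp [Polynomial.coeff_X_pow, Polynomial.coeff_C_mul, Polynomial.coeff_C, Polynomial.coeff_X,
    (show ¬(1 = m) by omega)] at h1
  simp [Polynomial.coeff_X_pow, Polynomial.coeff_C_mul, Polynomial.coeff_C, Polynomial.coeff_X,
    (show ¬(2 = m) by omega)] at hw
  simp [Polynomial.coeff_X_pow, Polynomial.coeff_C_mul, Polynomial.coeff_C, Polynomial.coeff_X,
    (show ¬(m = 0) by omega), (show ¬(m = 1) by omega), (show ¬(m = 2) by omega),
    (show ¬(0 = m) by omega), (show ¬(1 = m) by omega), (show ¬(2 = m) by omega)] at hx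
  exact ⟨h0, h1, hw, hx⟩

/-- the identity obtained by substituting the cscK solution into
`a₂ = K` holds on some nonempty open interval `I ⊆ (0,∞)` iff the stated
conditions on `A, B, C, K` hold, according to the dimension `n`. -/
theorem stmt_1 (n : ℕ) (hn : 1 ≤ n) (A B C K : ℝ) :
    (∃ I : Set ℝ, I.Nonempty ∧ (∃ a b : ℝ, I = Set.Ioo a b) ∧ I ⊆ Set.Ioi (0 : ℝ) ∧
      ∀ y ∈ I,
        ((n : ℝ) - 1) *
            (2 * B * C * (n : ℝ) ^ 2 * ((n : ℝ) + 1) * y ^ (-(2 * (n : ℤ)) - 1)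
              + C ^ 2 * (n : ℝ) * ((n : ℝ) + 1) * ((n : ℝ) + 2) * y ^ (-(2 * ((n : ℤ) + 1)))
              + B ^ 2 * (n : ℝ) * ((n : ℝ) + 1) * ((n : ℝ) - 2) * y ^ (-(2 * (n : ℤ)))
              + A ^ 2 * (n : ℝ) * ((n : ℝ) + 1) * (3 * (n : ℝ) + 2))
          = 24 * K)
    ↔ ((n = 1 ∧ K = 0)
        ∨ (n = 2 ∧ C = 0 ∧ K = 2 * A ^ 2)
        ∨ (3 ≤ n ∧ B = 0 ∧ C = 0 ∧
            K = A ^ 2 * (n : ℝ) * ((n : ℝ) + 1) * ((n : ℝ) - 1) * (3 * (n : ℝ) + 2) / 24)) := by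
  constructor
  · rintro ⟨I, ⟨y0, hy0⟩, ⟨a, b, rfl⟩, hsub, hid⟩
    have hab : a < b := Set.nonempty_Ioo.mp ⟨y0, hy0⟩
    rcases eq_or_lt_of_le hn with h1 | h2
    · left
      refine ⟨h1.symm, ?_⟩
      have hk := hid y0 hy0
      rw [← h1] at hk
      norm_num at hk
      linarith
    · -- n ≥ 2
      right
      set c1 : ℝ := 2*B*C*(n:ℝ)^2*((n:ℝ)+1) with hc1
      set c2 : ℝ := C^2*(n:ℝ)*((n:ℝ)+1)*((n:ℝ)+2) with hc2
      set c3 : ℝ := B^2*(n:ℝ)*((n:ℝ)+1)*((n:ℝ)-2) with hc3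
      set c4 : ℝ := A^2*(n:ℝ)*((n:ℝ)+1)*(3*(n:ℝ)+2) with hc4
      have hn2 : (2:ℝ) ≤ (n:ℝ) := by exact_mod_cast h2
      have hne : (n:ℝ) - 1 ≠ 0 := by linarith
      have hPzero : (Polynomial.C (((n:ℝ)-1)*c2) + Polynomial.C (((n:ℝ)-1)*c1) * Polynomial.X
          + Polynomial.C (((n:ℝ)-1)*c3) * Polynomial.X^2
          + Polynomial.C (((n:ℝ)-1)*c4 - 24*K) * Polynomial.X^(2*n+2)) = 0 := by
        apply Polynomial.eq_zero_of_infinite_isRoot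
        apply Set.Infinite.mono (s := Set.Ioo a b) ?_ (Set.Ioo_infinite hab)
        intro y hy
        have hypos : (0:ℝ) < y := hsub hy
        have hyne : y ≠ 0 := hypos.ne'
        have hz : y^(2*n+2) ≠ 0 := pow_ne_zero _ hyne
        have e1 : y ^ (-(2 * (n : ℤ)) - 1) = y / y^(2*n+2) := by
          rw [eq_div_iff hz, ← zpow_natCast y (2*n+2), ← zpow_add₀ hyne]
          rw [show (-(2 * (n : ℤ)) - 1 + ((2*n+2 : ℕ) : ℤ)) = 1 by push_cast; ring, zpow_one]
        have e2 : y ^ (-(2 * ((n : ℤ) + 1))) = 1 / y^(2*n+2) := by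
          rw [eq_div_iff hz, ← zpow_natCast y (2*n+2), ← zpow_add₀ hyne]
          rw [show (-(2 * ((n : ℤ)+1)) + ((2*n+2 : ℕ) : ℤ)) = 0 by push_cast; ring, zpow_zero]
        have e3 : y ^ (-(2 * (n : ℤ))) = y^2 / y^(2*n+2) := by
          rw [eq_div_iff hz, ← zpow_natCast y (2*n+2), ← zpow_add₀ hyne]
          rw [show (-(2 * (n : ℤ)) + ((2*n+2 : ℕ) : ℤ)) = ((2:ℕ):ℤ) by push_cast; ring,
            zpow_natCast]
        have hk := hid y hy
        rw [e1, e2, e3] at hk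
        have hk2 := congrArg (· * y^(2*n+2)) hk
        have expand : (((n:ℝ)-1) * (c1 * (y / y^(2*n+2)) + c2 * (1 / y^(2*n+2))
            + c3 * (y^2 / y^(2*n+2)) + c4)) * y^(2*n+2)
            = ((n:ℝ)-1)*c2 + ((n:ℝ)-1)*c1*y + ((n:ℝ)-1)*c3*y^2 + ((n:ℝ)-1)*c4*y^(2*n+2) := by
          field_simp
          ring
        rw [expand] at hk2
        show Polynomial.IsRoot _ y
        simp only [Polynomial.IsRoot, Polynomial.eval_add, Polynomial.eval_mul,
          Polynomial.eval_C, Polynomial.eval_X, Polynomial.eval_pow]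
        linear_combination hk2
      obtain ⟨h0, h1x, hh2, h4⟩ := stmt1_aux (2*n+2) (by omega) _ _ _ _ hPzero
      -- h0 : (n-1)*c2 = 0, hh2 : (n-1)*c3 = 0, h4 : (n-1)*c4 - 24*K = 0
      have hnpos : (0:ℝ) < (n:ℝ) := by linarith
      have hC : C = 0 := by
        have hc2z : c2 = 0 := by
          rcases mul_eq_zero.mp h0 with h | h
          · exact absurd h hne
          · exact h
        rw [hc2] at hc2z
        have hC2 : C^2 = 0 := by
          by_contra hCne
          have h1' : (n:ℝ) ≠ 0 := by positivity
          have h2' : (n:ℝ)+1 ≠ 0 := by positivity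
          have h3' : (n:ℝ)+2 ≠ 0 := by positivity
          rcases mul_eq_zero.mp hc2z with h | h
          · rcases mul_eq_zero.mp h with h | h
            · rcases mul_eq_zero.mp h with h | h
              · exact hCne h
              · exact h1' h
            · exact h2' h
          · exact h3' h
        exact pow_eq_zero_iff (two_ne_zero) |>.mp hC2
      rcases lt_or_ge n 3 with h3 | h3
      · -- n = 2
        have hn2' : n = 2 := by omega
        subst hn2'
        left
        refine ⟨rfl, hC, ?_⟩
        rw [hc4] at h4
        push_cast at h4
        nlinarith [h4]
      · -- n ≥ 3
        right
        have hn3 : (3:ℝ) ≤ (n:ℝ) := by exact_mod_cast h3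
        have hB : B = 0 := by
          have hc3z : c3 = 0 := by
            rcases mul_eq_zero.mp hh2 with h | h
            · exact absurd h hne
            · exact h
          rw [hc3] at hc3z
          have hB2 : B^2 = 0 := by
            by_contra hBne
            have h1' : (n:ℝ) ≠ 0 := by positivity
            have h2' : (n:ℝ)+1 ≠ 0 := by positivity
            have h3' : (n:ℝ)-2 ≠ 0 := by linarith
            rcases mul_eq_zero.mp hc3z with h | h
            · rcases mul_eq_zero.mp h with h | h
              · rcases mul_eq_zero.mp h with h | h
                · exact hBne h
                · exact h1' h
              · exact h2' h
            · exact h3' h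
          exact pow_eq_zero_iff (two_ne_zero) |>.mp hB2
        refine ⟨h3, hB, hC, ?_⟩
        rw [hc4] at h4
        field_simp
        linarith [h4]
  · rintro (⟨hn1, hK⟩ | ⟨hn2, hC, hK⟩ | ⟨hn3, hB, hC, hK⟩)
    · subst hn1 hK
      exact ⟨Set.Ioo 1 2, ⟨3/2, by norm_num⟩, ⟨1, 2, rfl⟩,
        fun y hy => lt_trans one_pos hy.1, fun y hy => by norm_num⟩
    · subst hn2 hC hK
      refine ⟨Set.Ioo 1 2, ⟨3/2, by norm_num⟩, ⟨1, 2, rfl⟩,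
        fun y hy => lt_trans one_pos hy.1, fun y hy => ?_⟩
      norm_num
      ring
    · subst hB hC hK
      refine ⟨Set.Ioo 1 2, ⟨3/2, by norm_num⟩, ⟨1, 2, rfl⟩,
        fun y hy => lt_trans one_pos hy.1, fun y hy => ?_⟩
      norm_num
      field_simp
end

section
/- Let n ≥ 1 be an integer and A, B, C, K real numbers. The identity n(n−1)(n+1)·( A³ n (n+1)(n−2) y^{3n+3} + A B² n (2−n)(n+3) y^{n+3} − 2Bn y^{n+2}( AC(n+1)(n+4) + B(n²−4) ) − C y^{n+1} (n+1)(n+2)( AC(n+6) + 4Bn ) − 2C² (n+1)(n+2)(n+3) y^{n} + 2B³ n (2−n)(2n+1) y³ − 6B²C n² (2n+1) y² − 6BC² (n+1)(2n²+3n+2) y − 2C³ (n+1)(n+2)(2n+3) ) = −48 K y^{3n+3} holds for all y in some nonempty open interval I ⊆ (0,∞) if and only if: (i) when n = 1, K = 0 (with A, B, C arbitrary); (ii) when n = 2, C = 0 and K = 0; (iii) when n ≥ 3, B = C = 0 and K = −A³ n² (n+1)² (n−1)(n−2)/48. -/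
open Polynomial in
/-- the identity obtained by substituting the cscK solution into
`a₃ = K` holds on some nonempty open interval `I ⊆ (0,∞)` iff the stated
conditions on `A, B, C, K` hold, according to the dimension `n`. -/
theorem stmt_2 (n : ℕ) (hn : 1 ≤ n) (A B C K : ℝ) :
    (∃ I : Set ℝ, I.Nonempty ∧ (∃ a b : ℝ, I = Set.Ioo a b) ∧ I ⊆ Set.Ioi (0 : ℝ) ∧
      ∀ y ∈ I,
        (n : ℝ) * ((n : ℝ) - 1) * ((n : ℝ) + 1) *
            (A ^ 3 * (n : ℝ) * ((n : ℝ) + 1) * ((n : ℝ) - 2) * y ^ (3 * n + 3)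
              + A * B ^ 2 * (n : ℝ) * (2 - (n : ℝ)) * ((n : ℝ) + 3) * y ^ (n + 3)
              - 2 * B * (n : ℝ) * y ^ (n + 2) *
                  (A * C * ((n : ℝ) + 1) * ((n : ℝ) + 4) + B * ((n : ℝ) ^ 2 - 4))
              - C * y ^ (n + 1) * ((n : ℝ) + 1) * ((n : ℝ) + 2) *
                  (A * C * ((n : ℝ) + 6) + 4 * B * (n : ℝ))
              - 2 * C ^ 2 * ((n : ℝ) + 1) * ((n : ℝ) + 2) * ((n : ℝ) + 3) * y ^ n
              + 2 * B ^ 3 * (n : ℝ) * (2 - (n : ℝ)) * (2 * (n : ℝ) + 1) * y ^ 3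
              - 6 * B ^ 2 * C * (n : ℝ) ^ 2 * (2 * (n : ℝ) + 1) * y ^ 2
              - 6 * B * C ^ 2 * ((n : ℝ) + 1) * (2 * (n : ℝ) ^ 2 + 3 * (n : ℝ) + 2) * y
              - 2 * C ^ 3 * ((n : ℝ) + 1) * ((n : ℝ) + 2) * (2 * (n : ℝ) + 3))
          = -48 * K * y ^ (3 * n + 3))
    ↔ ((n = 1 ∧ K = 0)
        ∨ (n = 2 ∧ C = 0 ∧ K = 0)
        ∨ (3 ≤ n ∧ B = 0 ∧ C = 0 ∧
            K = -(A ^ 3) * (n : ℝ) ^ 2 * ((n : ℝ) + 1) ^ 2 * ((n : ℝ) - 1) * ((n : ℝ) - 2) / 48)) := by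
  constructor
  · rintro ⟨I, hne, ⟨a, b, rfl⟩, hsub, hI⟩
    obtain ⟨y0, hy0⟩ := hne
    have hab : a < b := lt_trans hy0.1 hy0.2
    set N : ℝ := (n : ℝ) with hN
    -- the polynomial (LHS - RHS)
    set p : ℝ[X] :=
        Polynomial.C (N*(N-1)*(N+1) * (A^3*N*(N+1)*(N-2)) + 48*K) * X^(3*n+3)
      + Polynomial.C (N*(N-1)*(N+1) * (A*B^2*N*(2-N)*(N+3))) * X^(n+3)
      + Polynomial.C (N*(N-1)*(N+1) * (-(2*B*N*(A*C*(N+1)*(N+4)+B*(N^2-4))))) * X^(n+2)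
      + Polynomial.C (N*(N-1)*(N+1) * (-(C*(N+1)*(N+2)*(A*C*(N+6)+4*B*N)))) * X^(n+1)
      + Polynomial.C (N*(N-1)*(N+1) * (-(2*C^2*(N+1)*(N+2)*(N+3)))) * X^n
      + Polynomial.C (N*(N-1)*(N+1) * (2*B^3*N*(2-N)*(2*N+1))) * X^3
      + Polynomial.C (N*(N-1)*(N+1) * (-(6*B^2*C*N^2*(2*N+1)))) * X^2
      + Polynomial.C (N*(N-1)*(N+1) * (-(6*B*C^2*(N+1)*(2*N^2+3*N+2)))) * X
      + Polynomial.C (N*(N-1)*(N+1) * (-(2*C^3*(N+1)*(N+2)*(2*N+3)))) with hp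
    have hroot : ∀ y ∈ Set.Ioo a b, p.IsRoot y := by
      intro y hy
      have h := hI y hy
      simp only [hp, IsRoot, eval_add, eval_mul, eval_pow, eval_C, eval_X]
      linear_combination h
    have hp0 : p = 0 :=
      p.eq_zero_of_infinite_isRoot
        ((Set.infinite_coe_iff.1 (Set.Ioo.infinite hab)).mono hroot)
    have E1 : N*(N-1)*(N+1) * (A^3*N*(N+1)*(N-2)) + 48*K = 0 := by
      have h := congrArg (fun q => coeff q (3*n+3)) hp0
      simp only [hp, coeff_add, coeff_C_mul, coeff_X_pow, coeff_C, coeff_X, coeff_zero] at h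
      simp only [show ¬(3*n+3 = n+3) by omega, show ¬(3*n+3 = n+2) by omega,
        show ¬(3*n+3 = n+1) by omega, show ¬(3*n+3 = n) by omega,
        show ¬(3*n+3 = 3) by omega, show ¬(3*n+3 = 2) by omega,
        show ¬(1 = 3*n+3) by omega, show ¬(3*n+3 = 0) by omega,
        if_true, if_false, ite_true, ite_false, eq_self_iff_true,
        mul_one, mul_zero, add_zero, zero_add] at h
      linear_combination h
    have E9 : N*(N-1)*(N+1) * (-(2*C^3*(N+1)*(N+2)*(2*N+3))) = 0 := by
      have h := congrArg (fun q => coeff q 0) hp0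
      simp only [hp, coeff_add, coeff_C_mul, coeff_X_pow, coeff_C, coeff_X, coeff_zero] at h
      simp only [show ¬((0:ℕ) = 3*n+3) by omega, show ¬((0:ℕ) = n+3) by omega,
        show ¬((0:ℕ) = n+2) by omega, show ¬((0:ℕ) = n+1) by omega,
        show ¬((0:ℕ) = n) by omega, show ¬((0:ℕ) = 3) by omega,
        show ¬((0:ℕ) = 2) by omega, show ¬((1:ℕ) = 0) by omega,
        if_true, if_false, ite_true, ite_false, eq_self_iff_true,
        mul_one, mul_zero, add_zero, zero_add] at h
      linear_combination h
    rcases Nat.lt_or_ge n 2 with h1 | h2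
    · -- n = 1
      have hn1 : n = 1 := by omega
      left
      refine ⟨hn1, ?_⟩
      have hN1 : N = 1 := by rw [hN, hn1]; norm_num
      rw [hN1] at E1
      linear_combination (1/48 : ℝ) * E1
    · -- n ≥ 2 : get C = 0 from E9
      have hN2 : (2:ℝ) ≤ N := by rw [hN]; exact_mod_cast h2
      have hC : C = 0 := by
        have hC3 : C ^ 3 * (N*(N-1)*(N+1)*(2*(N+1)*(N+2)*(2*N+3))) = 0 := by
          linear_combination -E9
        have hpos : 0 < N*(N-1)*(N+1)*(2*(N+1)*(N+2)*(2*N+3)) := by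
          have h0 : (0:ℝ) < N := by linarith
          have hm : (0:ℝ) < N - 1 := by linarith
          have hp1 : (0:ℝ) < N + 1 := by linarith
          have hp2 : (0:ℝ) < N + 2 := by linarith
          have hp3 : (0:ℝ) < 2*N + 3 := by linarith
          have := mul_pos (mul_pos (mul_pos h0 hm) hp1)
            (mul_pos (mul_pos (mul_pos (by linarith : (0:ℝ) < 2) hp1) hp2) hp3)
          linarith [this]
        rcases mul_eq_zero.mp hC3 with h | h
        · exact pow_eq_zero_iff (by norm_num) |>.mp h
        · exact absurd h (ne_of_gt hpos)
      rcases Nat.lt_or_ge n 3 with h3 | h4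
      · -- n = 2
        have hn2 : n = 2 := by omega
        right; left
        refine ⟨hn2, hC, ?_⟩
        have hN2' : N = 2 := by rw [hN, hn2]; norm_num
        rw [hN2'] at E1
        linear_combination (1/48 : ℝ) * E1
      · -- n ≥ 3
        have hN3 : (3:ℝ) ≤ N := by rw [hN]; exact_mod_cast h4
        have E3 : N*(N-1)*(N+1) * (-(2*B*N*(A*C*(N+1)*(N+4)+B*(N^2-4)))) = 0 := by
          have h := congrArg (fun q => coeff q (n+2)) hp0
          simp only [hp, coeff_add, coeff_C_mul, coeff_X_pow, coeff_C, coeff_X, coeff_zero] at h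
          simp only [show ¬(n+2 = 3*n+3) by omega, show ¬(n+2 = n+3) by omega,
            show ¬(n+2 = n+1) by omega, show ¬(n+2 = n) by omega,
            show ¬(n+2 = 3) by omega, show ¬(n+2 = 2) by omega,
            show ¬(1 = n+2) by omega, show ¬(n+2 = 0) by omega,
            if_true, if_false, ite_true, ite_false, eq_self_iff_true,
            mul_one, mul_zero, add_zero, zero_add] at h
          linear_combination h
        have hB : B = 0 := by
          rw [hC] at E3
          have hB2 : B ^ 2 * (N*(N-1)*(N+1)*(2*N*(N^2-4))) = 0 := by
            linear_combination -E3
          have hpos : 0 < N*(N-1)*(N+1)*(2*N*(N^2-4)) := by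
            have h0 : (0:ℝ) < N := by linarith
            have hm : (0:ℝ) < N - 1 := by linarith
            have hp1 : (0:ℝ) < N + 1 := by linarith
            have hsq : (0:ℝ) < N^2 - 4 := by nlinarith
            have := mul_pos (mul_pos (mul_pos h0 hm) hp1)
              (mul_pos (mul_pos (by linarith : (0:ℝ) < 2) h0) hsq)
            linarith [this]
          rcases mul_eq_zero.mp hB2 with h | h
          · exact pow_eq_zero_iff (by norm_num) |>.mp h
          · exact absurd h (ne_of_gt hpos)
        right; right
        refine ⟨h4, hB, hC, ?_⟩
        linear_combination (1/48 : ℝ) * E1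
  · rintro (⟨hn1, hK⟩ | ⟨hn2, hC, hK⟩ | ⟨hn3, hB, hC, hK⟩)
    · refine ⟨Set.Ioo 1 2, ⟨1.5, by norm_num⟩, ⟨1, 2, rfl⟩,
        fun y hy => lt_trans one_pos hy.1, fun y hy => ?_⟩
      subst hn1 hK
      push_cast
      ring
    · refine ⟨Set.Ioo 1 2, ⟨1.5, by norm_num⟩, ⟨1, 2, rfl⟩,
        fun y hy => lt_trans one_pos hy.1, fun y hy => ?_⟩
      subst hn2 hC hK
      push_cast
      ring
    · refine ⟨Set.Ioo 1 2, ⟨1.5, by norm_num⟩, ⟨1, 2, rfl⟩,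
        fun y hy => lt_trans one_pos hy.1, fun y hy => ?_⟩
      subst hB hC
      rw [hK]
      ring
end

section
/- Let a, b, D be real numbers with a ≠ 0 and D > 0, and set c = b²/(4a) − a D². Let I ⊆ ℝ be a nonempty open interval and let Φ : I → ℝ be twice differentiable with Φ''(t) = a·Φ'(t)² + b·Φ'(t) + c for all t ∈ I, and suppose |Φ'(t₀) + b/(2a)| < D for some t₀ ∈ I. Then there exist ξ > 0 and κ ∈ ℝ such that Φ(t) = −(1/a)·( log(1 + ξ e^{2aDt}) + (b/2 − Da)·t ) + κ for all t ∈ I. -/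
/-!
If `r` is a root of `aX² + bX + c`, the equation factors as
`(r - Φ')' = (aΦ' + ar + b)(r - Φ')`, a linear equation whose integrating factor
`exp (aΦ + (ar + b)t)` is explicit in `Φ`. Applying this to the two roots
`r₁,₂ = ∓D - b/(2a)` and subtracting the two resulting formulas eliminates `Φ'`, leaving an
equation for `exp (aΦ)` that is solved by taking logarithms. Since `Φ'(t₀)` lies strictly between
the roots, `ξ = (r₂ - Φ'(t₀)) / (Φ'(t₀) - r₁) · exp (-2aDt₀)` is positive.
-/

open Set Real

theorem eq_mul_exp_sub_of_hasDerivAt {s : Set ℝ} (hs : IsOpen s) (hs' : IsPreconnected s)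
    {u F g : ℝ → ℝ} (hF : ∀ t ∈ s, HasDerivAt F (g t) t)
    (hu : ∀ t ∈ s, HasDerivAt u (g t * u t) t) {t₀ t : ℝ} (ht₀ : t₀ ∈ s) (ht : t ∈ s) :
    u t = u t₀ * exp (F t - F t₀) := by
  have hderiv : ∀ t ∈ s, HasDerivAt (fun t => u t * exp (-F t)) 0 t := fun t ht =>
    ((hu t ht).mul (hF t ht).neg.exp).congr_deriv (by ring)
  have hconst : u t * exp (-F t) = u t₀ * exp (-F t₀) :=
    hs.is_const_of_deriv_eq_zero hs'
      (fun t ht => (hderiv t ht).differentiableAt.differentiableWithinAt)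
      (fun t ht => (hderiv t ht).deriv) ht ht₀
  rw [exp_neg, exp_neg] at hconst
  rw [exp_sub]
  field_simp at hconst ⊢
  linarith

theorem root_sub_deriv_eq_mul_exp {a b c r : ℝ} (hr : a * r ^ 2 + b * r + c = 0)
    {s : Set ℝ} (hs : IsOpen s) (hs' : IsPreconnected s) {Φ : ℝ → ℝ}
    (hΦ₁ : ∀ t ∈ s, DifferentiableAt ℝ Φ t) (hΦ₂ : ∀ t ∈ s, DifferentiableAt ℝ (deriv Φ) t)
    (hode : ∀ t ∈ s, deriv (deriv Φ) t = a * (deriv Φ t) ^ 2 + b * deriv Φ t + c)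
    {t₀ t : ℝ} (ht₀ : t₀ ∈ s) (ht : t ∈ s) :
    r - deriv Φ t = (r - deriv Φ t₀) * exp (a * (Φ t - Φ t₀) + (a * r + b) * (t - t₀)) := by
  have hF : ∀ t ∈ s, HasDerivAt (fun t => a * Φ t + (a * r + b) * t)
      (a * deriv Φ t + a * r + b) t := fun t ht =>
    (((hΦ₁ t ht).hasDerivAt.const_mul a).add ((hasDerivAt_id t).const_mul (a * r + b)))
      |>.congr_deriv (by simp only [mul_one]; ring)
  have hu : ∀ t ∈ s, HasDerivAt (fun t => r - deriv Φ t)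
      ((a * deriv Φ t + a * r + b) * (r - deriv Φ t)) t := fun t ht =>
    ((hΦ₂ t ht).hasDerivAt.const_sub r).congr_deriv
      (by rw [hode t ht]; linear_combination -hr)
  convert eq_mul_exp_sub_of_hasDerivAt hs hs' hF hu ht₀ ht using 3
  ring

theorem log_div_eq_log_one_add_mul_exp_add {r₁ r₂ p p₀ μ t t₀ X : ℝ} (h₁ : r₁ < p₀)
    (h₂ : p₀ < r₂) (hr₂ : r₂ - p = (r₂ - p₀) * exp (X + μ * (t - t₀)))
    (hr₁ : r₁ - p = (r₁ - p₀) * exp X) :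
    log ((r₂ - r₁) / (p₀ - r₁))
      = log (1 + (r₂ - p₀) / (p₀ - r₁) * exp (-(μ * t₀)) * exp (μ * t)) + X := by
  have hsub₁ : 0 < p₀ - r₁ := by linarith
  have hsub₂ : 0 < r₂ - p₀ := by linarith
  have hsplit : exp (X + μ * (t - t₀)) = exp (-(μ * t₀)) * exp (μ * t) * exp X := by
    rw [← exp_add, ← exp_add]; ring_nf
  have hdiff : (r₂ - r₁) / (p₀ - r₁)
      = (1 + (r₂ - p₀) / (p₀ - r₁) * exp (-(μ * t₀)) * exp (μ * t)) * exp X := by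
    rw [hsplit] at hr₂
    rw [div_eq_iff hsub₁.ne']
    linear_combination hr₂ - hr₁
      - exp (-(μ * t₀)) * exp (μ * t) * exp X * div_mul_cancel₀ (r₂ - p₀) hsub₁.ne'
  rw [hdiff, log_mul (by positivity) (exp_pos X).ne', log_exp]

theorem stmt_9_general (a b D : ℝ) (ha : a ≠ 0)
    (c : ℝ) (hc : c = b ^ 2 / (4 * a) - a * D ^ 2)
    (I : Set ℝ) (hIab : ∃ x y : ℝ, I = Set.Ioo x y)
    (Φ : ℝ → ℝ)
    (hΦ₁ : ∀ t ∈ I, DifferentiableAt ℝ Φ t)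
    (hΦ₂ : ∀ t ∈ I, DifferentiableAt ℝ (deriv Φ) t)
    (hode : ∀ t ∈ I, deriv (deriv Φ) t = a * (deriv Φ t) ^ 2 + b * deriv Φ t + c)
    (hpt : ∃ t₀ ∈ I, |deriv Φ t₀ + b / (2 * a)| < D) :
    ∃ ξ : ℝ, 0 < ξ ∧ ∃ κ : ℝ, ∀ t ∈ I,
      Φ t = -(1 / a) * (Real.log (1 + ξ * Real.exp (2 * a * D * t))
              + (b / 2 - D * a) * t) + κ := by
  obtain ⟨x, y, rfl⟩ := hIab
  obtain ⟨t₀, ht₀, hpt₀⟩ := hpt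
  obtain ⟨hlo, hhi⟩ := abs_lt.mp hpt₀
  obtain ⟨r₁, hr₁⟩ : ∃ r, r = -D - b / (2 * a) := ⟨_, rfl⟩
  obtain ⟨r₂, hr₂⟩ : ∃ r, r = D - b / (2 * a) := ⟨_, rfl⟩
  have hroot {r : ℝ} (hr : a * r ^ 2 + b * r + c = 0) {t : ℝ} (ht : t ∈ Ioo x y) :=
    root_sub_deriv_eq_mul_exp hr isOpen_Ioo isPreconnected_Ioo hΦ₁ hΦ₂ hode ht₀ ht
  have hr₁root : a * r₁ ^ 2 + b * r₁ + c = 0 := by rw [hr₁, hc]; field_simp; ring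
  have hr₂root : a * r₂ ^ 2 + b * r₂ + c = 0 := by rw [hr₂, hc]; field_simp; ring
  have h₁ : r₁ < deriv Φ t₀ := by linarith
  have h₂ : deriv Φ t₀ < r₂ := by linarith
  refine ⟨(r₂ - deriv Φ t₀) / (deriv Φ t₀ - r₁) * exp (-(2 * a * D * t₀)),
    mul_pos (div_pos (by linarith) (by linarith)) (exp_pos _),
    Φ t₀ + (log ((r₂ - r₁) / (deriv Φ t₀ - r₁)) + (b / 2 - D * a) * t₀) / a, fun t ht => ?_⟩
  have hroot₂ := hroot hr₂root ht
  rw [show a * (Φ t - Φ t₀) + (a * r₂ + b) * (t - t₀)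
    = a * (Φ t - Φ t₀) + (a * r₁ + b) * (t - t₀) + 2 * a * D * (t - t₀) by
      rw [hr₁, hr₂]; ring] at hroot₂
  rw [log_div_eq_log_one_add_mul_exp_add h₁ h₂ hroot₂ (hroot hr₁root ht), hr₁]
  field_simp
  ring

/-- uniqueness for Case 1a: any twice differentiable solution of
`Φ'' = aΦ'² + bΦ' + c` (with `c = b²/(4a) − aD²`) on a nonempty open interval
with `|Φ'(t₀) + b/(2a)| < D` for some `t₀` is of the Case 1a form. -/
theorem stmt_9 (a b D : ℝ) (ha : a ≠ 0) (hD : 0 < D)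
    (c : ℝ) (hc : c = b ^ 2 / (4 * a) - a * D ^ 2)
    (I : Set ℝ) (hI : I.Nonempty) (hIab : ∃ x y : ℝ, I = Set.Ioo x y)
    (Φ : ℝ → ℝ)
    (hΦ₁ : ∀ t ∈ I, DifferentiableAt ℝ Φ t)
    (hΦ₂ : ∀ t ∈ I, DifferentiableAt ℝ (deriv Φ) t)
    (hode : ∀ t ∈ I, deriv (deriv Φ) t = a * (deriv Φ t) ^ 2 + b * deriv Φ t + c)
    (hpt : ∃ t₀ ∈ I, |deriv Φ t₀ + b / (2 * a)| < D) :
    ∃ ξ : ℝ, 0 < ξ ∧ ∃ κ : ℝ, ∀ t ∈ I,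
      Φ t = -(1 / a) * (Real.log (1 + ξ * Real.exp (2 * a * D * t))
              + (b / 2 - D * a) * t) + κ :=
  stmt_9_general a b D ha c hc I hIab Φ hΦ₁ hΦ₂ hode hpt
end

section
/- Let a, b, D be real numbers with a ≠ 0 and D > 0, and set c = b²/(4a) − a D². Let I ⊆ ℝ be a nonempty open interval and let Φ : I → ℝ be twice differentiable with Φ''(t) = a·Φ'(t)² + b·Φ'(t) + c for all t ∈ I, and suppose |Φ'(t₀) + b/(2a)| > D for some t₀ ∈ I. Then there exist ξ > 0 and κ ∈ ℝ such that for all t ∈ I one has ξ e^{2aDt} ≠ 1 and Φ(t) = −(1/a)·( log|1 − ξ e^{2aDt}| + (b/2 − Da)·t ) + κ. -/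
/-!
With `ψ = Φ' + b/(2a)` the equation becomes the Riccati equation `ψ' = a (ψ - D)(ψ + D)`, which has
two first integrals: `(ψ + D) e^{-(aΦ + (b/2 - aD) t)}` and `(ψ - D)/(ψ + D) e^{-2aDt}`. The first
one never vanishes, since it does not vanish at `t₀`; call `ξ > 0` the value of the second one.
Solving the second for `ψ + D = 2D / (1 - ξ e^{2aDt})` and substituting into the first gives `Φ`.
-/

open Real

theorem hasDerivAt_mul_exp_neg_eq_zero {f G : ℝ → ℝ} {g t : ℝ}
    (hf : HasDerivAt f (g * f t) t) (hG : HasDerivAt G g t) :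
    HasDerivAt (fun s => f s * exp (-G s)) 0 t :=
  (hf.mul hG.neg.exp).congr_deriv (by ring)

theorem IsOpen.is_const_of_hasDerivAt_zero {s : Set ℝ} (hs : IsOpen s) (hs' : IsPreconnected s)
    {f : ℝ → ℝ} (hf : ∀ t ∈ s, HasDerivAt f 0 t) {x y : ℝ} (hx : x ∈ s) (hy : y ∈ s) :
    f x = f y :=
  hs.is_const_of_deriv_eq_zero hs' (fun t ht => (hf t ht).differentiableAt.differentiableWithinAt)
    (fun t ht => (hf t ht).deriv) hx hy

namespace Riccati

variable {a b D : ℝ} {Φ ψ : ℝ → ℝ}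

theorem hasDerivAt_add_mul_exp {t : ℝ} (ha : a ≠ 0) (hΦ : HasDerivAt Φ (ψ t - b / (2 * a)) t)
    (hψ : HasDerivAt ψ (a * (ψ t ^ 2 - D ^ 2)) t) :
    HasDerivAt (fun t => (ψ t + D) * exp (-(a * Φ t + (b / 2 - a * D) * t))) 0 t :=
  hasDerivAt_mul_exp_neg_eq_zero (g := a * (ψ t - D))
    ((hψ.add_const D).congr_deriv (by ring))
    (((hΦ.const_mul a).add ((hasDerivAt_id t).const_mul (b / 2 - a * D))).congr_deriv
      (by field_simp; ring))

theorem hasDerivAt_ratio_mul_exp {t : ℝ} (hψ : HasDerivAt ψ (a * (ψ t ^ 2 - D ^ 2)) t)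
    (hne : ψ t + D ≠ 0) :
    HasDerivAt (fun t => (ψ t - D) / (ψ t + D) * exp (-(2 * a * D * t))) 0 t :=
  hasDerivAt_mul_exp_neg_eq_zero (g := 2 * a * D)
    (((hψ.sub_const D).div (hψ.add_const D) hne).congr_deriv (by field_simp; ring))
    (by simpa using (hasDerivAt_id t).const_mul (2 * a * D))

/-- Here `y`, `w`, `q` stand for `ψ t`, `e^{2aDt}` and the value of the first integral. -/
theorem eq_of_first_integrals {t q ξ w y : ℝ} (ha : a ≠ 0) (hD : D ≠ 0) (hq : q ≠ 0)
    (hratio : (y + D) * (1 - ξ * w) = 2 * D)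
    (hint : (y + D) * exp (-(a * Φ t + (b / 2 - a * D) * t)) = q) :
    Φ t = -(1 / a) * (log |1 - ξ * w| + (b / 2 - D * a) * t) + -(1 / a) * log (q / (2 * D)) := by
  have h2D : 2 * D ≠ 0 := mul_ne_zero two_ne_zero hD
  have hprod : (y + D) * (1 - ξ * w) ≠ 0 := hratio ▸ h2D
  have hy : y + D ≠ 0 := left_ne_zero_of_mul hprod
  have hw : 1 - ξ * w ≠ 0 := right_ne_zero_of_mul hprod
  have hexp : exp (-(a * Φ t + (b / 2 - a * D) * t)) = q / (2 * D) * (1 - ξ * w) := by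
    rw [← hint, ← hratio]
    field_simp
  have hlog := congrArg log hexp
  rw [log_exp, log_mul (div_ne_zero hq h2D) hw, ← log_abs (1 - ξ * w)] at hlog
  field_simp
  linear_combination (-2) * hlog

theorem exists_eq_neg_log_of_lt_abs (ha : a ≠ 0) (hD : 0 < D) {s : Set ℝ} (hs : IsOpen s)
    (hs' : IsPreconnected s) (hΦ : ∀ t ∈ s, HasDerivAt Φ (ψ t - b / (2 * a)) t)
    (hψ : ∀ t ∈ s, HasDerivAt ψ (a * (ψ t ^ 2 - D ^ 2)) t) {t₀ : ℝ} (ht₀ : t₀ ∈ s)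
    (hψ₀ : D < |ψ t₀|) :
    ∃ ξ : ℝ, 0 < ξ ∧ ∃ κ : ℝ, ∀ t ∈ s,
      ξ * exp (2 * a * D * t) ≠ 1 ∧
      Φ t = -(1 / a) * (log |1 - ξ * exp (2 * a * D * t)| + (b / 2 - D * a) * t) + κ := by
  set Q := fun t => (ψ t + D) * exp (-(a * Φ t + (b / 2 - a * D) * t))
  have hQ : ∀ t ∈ s, Q t = Q t₀ := fun t ht =>
    hs.is_const_of_hasDerivAt_zero hs' (fun t ht => hasDerivAt_add_mul_exp ha (hΦ t ht) (hψ t ht))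
      ht ht₀
  have hsign : 0 < (ψ t₀ - D) / (ψ t₀ + D) := by
    rcases lt_abs.mp hψ₀ with h | h
    · exact div_pos (by linarith) (by linarith)
    · exact div_pos_of_neg_of_neg (by linarith) (by linarith)
  have hQ₀ : Q t₀ ≠ 0 := mul_ne_zero (fun h => hsign.ne' (by rw [h, div_zero])) (exp_ne_zero _)
  have hne : ∀ t ∈ s, ψ t + D ≠ 0 := fun t ht h => hQ₀ (by rw [← hQ t ht]; simp [Q, h])
  set R := fun t => (ψ t - D) / (ψ t + D) * exp (-(2 * a * D * t))
  have hR : ∀ t ∈ s, R t = R t₀ := fun t ht =>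
    hs.is_const_of_hasDerivAt_zero hs' (fun t ht => hasDerivAt_ratio_mul_exp (hψ t ht) (hne t ht))
      ht ht₀
  have hratio : ∀ t ∈ s, (ψ t + D) * (1 - R t₀ * exp (2 * a * D * t)) = 2 * D := by
    intro t ht
    have hξ : R t₀ * exp (2 * a * D * t) = (ψ t - D) / (ψ t + D) := by
      rw [← hR t ht, mul_assoc, ← exp_add, neg_add_cancel, exp_zero, mul_one]
    rw [hξ]
    field_simp [hne t ht]
    ring
  refine ⟨R t₀, mul_pos hsign (exp_pos _), -(1 / a) * log (Q t₀ / (2 * D)), fun t ht => ⟨?_, ?_⟩⟩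
  · intro h
    have h2D := hratio t ht
    rw [h, sub_self, mul_zero] at h2D
    linarith
  · exact eq_of_first_integrals ha hD.ne' hQ₀ (hratio t ht) (hQ t ht)

end Riccati

theorem stmt_10_general (a b D : ℝ) (ha : a ≠ 0) (hD : 0 < D)
    (c : ℝ) (hc : c = b ^ 2 / (4 * a) - a * D ^ 2)
    (I : Set ℝ) (hIab : ∃ x y : ℝ, I = Set.Ioo x y)
    (Φ : ℝ → ℝ)
    (hΦ₁ : ∀ t ∈ I, DifferentiableAt ℝ Φ t)
    (hΦ₂ : ∀ t ∈ I, DifferentiableAt ℝ (deriv Φ) t)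
    (hode : ∀ t ∈ I, deriv (deriv Φ) t = a * (deriv Φ t) ^ 2 + b * deriv Φ t + c)
    (hpt : ∃ t₀ ∈ I, D < |deriv Φ t₀ + b / (2 * a)|) :
    ∃ ξ : ℝ, 0 < ξ ∧ ∃ κ : ℝ, ∀ t ∈ I,
      ξ * Real.exp (2 * a * D * t) ≠ 1 ∧
      Φ t = -(1 / a) * (Real.log |1 - ξ * Real.exp (2 * a * D * t)|
              + (b / 2 - D * a) * t) + κ := by
  obtain ⟨x, y, rfl⟩ := hIab
  obtain ⟨t₀, ht₀, hψ₀⟩ := hpt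
  refine Riccati.exists_eq_neg_log_of_lt_abs (ψ := fun t => deriv Φ t + b / (2 * a)) ha hD
    isOpen_Ioo isPreconnected_Ioo (fun t ht => ?_) (fun t ht => ?_) ht₀ hψ₀
  · exact (hΦ₁ t ht).hasDerivAt.congr_deriv (by ring)
  · exact ((hΦ₂ t ht).hasDerivAt.add_const _).congr_deriv
      (by rw [hode t ht, hc]; field_simp; ring)

/-- uniqueness for Case 1b: any twice differentiable solution of
`Φ'' = aΦ'² + bΦ' + c` (with `c = b²/(4a) − aD²`) on a nonempty open interval
with `|Φ'(t₀) + b/(2a)| > D` for some `t₀` is of the Case 1b form. -/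
theorem stmt_10 (a b D : ℝ) (ha : a ≠ 0) (hD : 0 < D)
    (c : ℝ) (hc : c = b ^ 2 / (4 * a) - a * D ^ 2)
    (I : Set ℝ) (hI : I.Nonempty) (hIab : ∃ x y : ℝ, I = Set.Ioo x y)
    (Φ : ℝ → ℝ)
    (hΦ₁ : ∀ t ∈ I, DifferentiableAt ℝ Φ t)
    (hΦ₂ : ∀ t ∈ I, DifferentiableAt ℝ (deriv Φ) t)
    (hode : ∀ t ∈ I, deriv (deriv Φ) t = a * (deriv Φ t) ^ 2 + b * deriv Φ t + c)
    (hpt : ∃ t₀ ∈ I, D < |deriv Φ t₀ + b / (2 * a)|) :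
    ∃ ξ : ℝ, 0 < ξ ∧ ∃ κ : ℝ, ∀ t ∈ I,
      ξ * Real.exp (2 * a * D * t) ≠ 1 ∧
      Φ t = -(1 / a) * (Real.log |1 - ξ * Real.exp (2 * a * D * t)|
              + (b / 2 - D * a) * t) + κ :=
  stmt_10_general a b D ha hD c hc I hIab Φ hΦ₁ hΦ₂ hode hpt
end

section
/- Let a, b be real numbers with a ≠ 0, and set c = b²/(4a). Let I ⊆ ℝ be a nonempty open interval and let Φ : I → ℝ be twice differentiable with Φ''(t) = a·Φ'(t)² + b·Φ'(t) + c for all t ∈ I, and suppose Φ'(t₀) ≠ −b/(2a) for some t₀ ∈ I. Then there exist real constants κ and μ such that for all t ∈ I one has t + κ ≠ 0 and Φ(t) = −(1/a)·log|t + κ| − (b/(2a))·t + μ. -/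
/-!
Set `ψ = Φ' + b/(2a)`. Because the discriminant vanishes, the ODE becomes `ψ' = aψ²`, whose
solutions with `ψ(t₀) ≠ 0` are `ψ(t) = 1/(1/ψ(t₀) - a(t - t₀)) = -1/(a(t + κ))`; integrating
`Φ' = ψ - b/(2a)` once more gives the logarithm.
-/

open Set Real

section

variable {s : Set ℝ}

theorem eqOn_zero_of_hasDerivAt_mul_self (hs : IsOpen s) (hs' : IsPreconnected s)
    {u P q : ℝ → ℝ} {t₀ : ℝ} (hP : ∀ t ∈ s, HasDerivAt P (q t) t)
    (hu : ∀ t ∈ s, HasDerivAt u (q t * u t) t) (ht₀ : t₀ ∈ s) (hu₀ : u t₀ = 0) :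
    s.EqOn u 0 := by
  set w : ℝ → ℝ := fun t => u t * exp (-P t)
  have hw : ∀ t ∈ s, HasDerivAt w 0 t := fun t ht =>
    ((hu t ht).mul (hP t ht).neg.exp).congr_deriv (by ring)
  have hw_zero : s.EqOn w 0 :=
    hs.eqOn_of_deriv_eq hs' (fun t ht => (hw t ht).differentiableAt.differentiableWithinAt)
      (differentiableOn_const 0) (fun t ht => by simp [(hw t ht).deriv]) ht₀
      (by simp [w, hu₀])
  intro t ht
  simpa [w, exp_ne_zero] using hw_zero ht

/-- `u = ψ · (1/ψ(t₀) - a(t - t₀)) - 1` solves the linear equation `u' = aψ u`, which avoids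
dividing by `ψ` before knowing that it does not vanish. -/
theorem mul_inv_sub_eq_one_of_hasDerivAt_mul_sq (hs : IsOpen s) (hs' : IsPreconnected s)
    {ψ P : ℝ → ℝ} {a t₀ : ℝ} (hP : ∀ t ∈ s, HasDerivAt P (a * ψ t) t)
    (hψ : ∀ t ∈ s, HasDerivAt ψ (a * ψ t ^ 2) t) (ht₀ : t₀ ∈ s) (hψ₀ : ψ t₀ ≠ 0) :
    ∀ t ∈ s, ψ t * ((ψ t₀)⁻¹ - a * (t - t₀)) = 1 := by
  have hg (t : ℝ) : HasDerivAt (fun t => (ψ t₀)⁻¹ - a * (t - t₀)) (-a) t := by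
    simpa using ((hasDerivAt_id t).sub_const t₀).const_mul a |>.const_sub (ψ t₀)⁻¹
  have hu : ∀ t ∈ s, HasDerivAt (fun t => ψ t * ((ψ t₀)⁻¹ - a * (t - t₀)) - 1)
      (a * ψ t * (ψ t * ((ψ t₀)⁻¹ - a * (t - t₀)) - 1)) t := fun t ht =>
    (((hψ t ht).mul (hg t)).sub_const 1).congr_deriv (by ring)
  intro t ht
  simpa [sub_eq_zero] using
    eqOn_zero_of_hasDerivAt_mul_self hs hs' hP hu ht₀ (by field_simp; ring) ht

theorem exists_eq_neg_inv_of_hasDerivAt_mul_sq (hs : IsOpen s) (hs' : IsPreconnected s)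
    {ψ P : ℝ → ℝ} {a t₀ : ℝ} (ha : a ≠ 0) (hP : ∀ t ∈ s, HasDerivAt P (a * ψ t) t)
    (hψ : ∀ t ∈ s, HasDerivAt ψ (a * ψ t ^ 2) t) (ht₀ : t₀ ∈ s) (hψ₀ : ψ t₀ ≠ 0) :
    ∃ κ, ∀ t ∈ s, t + κ ≠ 0 ∧ ψ t = -(a * (t + κ))⁻¹ := by
  have hψg := mul_inv_sub_eq_one_of_hasDerivAt_mul_sq hs hs' hP hψ ht₀ hψ₀
  set κ := -t₀ - (a * ψ t₀)⁻¹ with hκ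
  clear_value κ
  have hg (t : ℝ) : (ψ t₀)⁻¹ - a * (t - t₀) = -a * (t + κ) := by
    rw [hκ]
    field_simp
    ring
  refine ⟨κ, fun t ht => ?_⟩
  have hψt := hg t ▸ hψg t ht
  refine ⟨fun h0 => by simp [h0] at hψt, ?_⟩
  rw [eq_inv_of_mul_eq_one_left hψt, neg_mul, inv_neg]

theorem exists_eq_mul_log_abs_add_of_hasDerivAt (hs : IsOpen s) (hs' : IsPreconnected s)
    {Φ : ℝ → ℝ} {α β κ : ℝ} (hκ : ∀ t ∈ s, t + κ ≠ 0)
    (hΦ : ∀ t ∈ s, HasDerivAt Φ (α * (t + κ)⁻¹ + β) t) :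
    ∃ μ, ∀ t ∈ s, Φ t = α * log |t + κ| + β * t + μ := by
  have hF : ∀ t ∈ s, HasDerivAt (fun t => α * log |t + κ| + β * t) (α * (t + κ)⁻¹ + β) t :=
    fun t ht => by
      simp only [log_abs]
      exact (((((hasDerivAt_id' t).add_const κ).log (hκ t ht)).const_mul α).add
        ((hasDerivAt_id' t).const_mul β)).congr_deriv (by ring)
  obtain ⟨μ, hμ⟩ := hs.exists_eq_add_of_deriv_eq hs'
    (fun t ht => (hΦ t ht).differentiableAt.differentiableWithinAt)
    (fun t ht => (hF t ht).differentiableAt.differentiableWithinAt)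
    (fun t ht => by rw [(hΦ t ht).deriv, (hF t ht).deriv])
  exact ⟨μ, fun t ht => hμ ht⟩

end

theorem stmt_11_general (a b : ℝ) (ha : a ≠ 0)
    (c : ℝ) (hc : c = b ^ 2 / (4 * a))
    (I : Set ℝ) (hIab : ∃ x y : ℝ, I = Set.Ioo x y)
    (Φ : ℝ → ℝ)
    (hΦ₁ : ∀ t ∈ I, DifferentiableAt ℝ Φ t)
    (hΦ₂ : ∀ t ∈ I, DifferentiableAt ℝ (deriv Φ) t)
    (hode : ∀ t ∈ I, deriv (deriv Φ) t = a * (deriv Φ t) ^ 2 + b * deriv Φ t + c)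
    (hpt : ∃ t₀ ∈ I, deriv Φ t₀ ≠ -b / (2 * a)) :
    ∃ κ μ : ℝ, ∀ t ∈ I,
      t + κ ≠ 0 ∧
      Φ t = -(1 / a) * Real.log |t + κ| - (b / (2 * a)) * t + μ := by
  obtain ⟨x, y, rfl⟩ := hIab
  obtain ⟨t₀, ht₀, hΦ't₀⟩ := hpt
  obtain ⟨ψ, hψ_def⟩ : ∃ ψ : ℝ → ℝ, ψ = fun t => deriv Φ t + b / (2 * a) := ⟨_, rfl⟩
  have hΦψ (t : ℝ) : deriv Φ t = ψ t - b / (2 * a) := by simp [hψ_def]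
  have hψ : ∀ t ∈ Ioo x y, HasDerivAt ψ (a * ψ t ^ 2) t := fun t ht => by
    subst hψ_def
    refine ((hΦ₂ t ht).hasDerivAt.add_const (b / (2 * a))).congr_deriv ?_
    rw [hode t ht, hc]
    field_simp
    ring
  have hP : ∀ t ∈ Ioo x y, HasDerivAt (fun t => a * Φ t + b / 2 * t) (a * ψ t) t :=
    fun t ht => by
      refine (((hΦ₁ t ht).hasDerivAt.const_mul a).add
        ((hasDerivAt_id' t).const_mul (b / 2))).congr_deriv ?_
      rw [hΦψ]
      field_simp
      ring
  have hψ₀ : ψ t₀ ≠ 0 := fun h => hΦ't₀ (by rw [hΦψ, h]; ring)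
  obtain ⟨κ, hκ⟩ := exists_eq_neg_inv_of_hasDerivAt_mul_sq isOpen_Ioo isPreconnected_Ioo ha hP hψ
    ht₀ hψ₀
  have hΦ' : ∀ t ∈ Ioo x y, HasDerivAt Φ (-(1 / a) * (t + κ)⁻¹ + -(b / (2 * a))) t :=
    fun t ht => (hΦ₁ t ht).hasDerivAt.congr_deriv (by rw [hΦψ, (hκ t ht).2, mul_inv]; ring)
  obtain ⟨μ, hμ⟩ := exists_eq_mul_log_abs_add_of_hasDerivAt isOpen_Ioo isPreconnected_Ioo
    (fun t ht => (hκ t ht).1) hΦ'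
  exact ⟨κ, μ, fun t ht => ⟨(hκ t ht).1, by rw [hμ t ht]; ring⟩⟩

/-- uniqueness for Case 2: any twice differentiable solution of
`Φ'' = aΦ'² + bΦ' + c` (with `c = b²/(4a)`) on a nonempty open interval with
`Φ'(t₀) ≠ −b/(2a)` for some `t₀` is of the Case 2 form. -/
theorem stmt_11 (a b : ℝ) (ha : a ≠ 0)
    (c : ℝ) (hc : c = b ^ 2 / (4 * a))
    (I : Set ℝ) (hI : I.Nonempty) (hIab : ∃ x y : ℝ, I = Set.Ioo x y)
    (Φ : ℝ → ℝ)
    (hΦ₁ : ∀ t ∈ I, DifferentiableAt ℝ Φ t)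
    (hΦ₂ : ∀ t ∈ I, DifferentiableAt ℝ (deriv Φ) t)
    (hode : ∀ t ∈ I, deriv (deriv Φ) t = a * (deriv Φ t) ^ 2 + b * deriv Φ t + c)
    (hpt : ∃ t₀ ∈ I, deriv Φ t₀ ≠ -b / (2 * a)) :
    ∃ κ μ : ℝ, ∀ t ∈ I,
      t + κ ≠ 0 ∧
      Φ t = -(1 / a) * Real.log |t + κ| - (b / (2 * a)) * t + μ :=
  stmt_11_general a b ha c hc I hIab Φ hΦ₁ hΦ₂ hode hpt
end

section
/- Let a, b, D be real numbers with a ≠ 0 and D > 0, and set c = b²/(4a) + a D². Let I ⊆ ℝ be a nonempty open interval and let Φ : I → ℝ be twice differentiable with Φ''(t) = a·Φ'(t)² + b·Φ'(t) + c for all t ∈ I. Then there exist real constants κ and μ such that for all t ∈ I one has cos(aDt + κ) ≠ 0 and Φ(t) = −(1/a)·log|cos(aDt + κ)| − (b/(2a))·t + μ. -/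
/-! Put `v = (Φ' + b/(2a)) / D`. Completing the square turns the ODE into the Riccati equation
`v' = aD (1 + v²)`, so `arctan ∘ v` has constant derivative `aD` and `v = tan (aDt + κ)` with
`cos (aDt + κ) > 0`. Since `-(1/a) log |cos (aDt + κ)|` has derivative `D tan (aDt + κ)`, the
function `Φ + (1/a) log |cos (aDt + κ)| + (b/(2a)) t` has derivative zero on the interval. -/

open Real Set

theorem IsOpen.exists_eq_const_of_hasDerivAt_zero {s : Set ℝ} {f : ℝ → ℝ} (hs : IsOpen s)
    (hs' : IsPreconnected s) (hf : ∀ t ∈ s, HasDerivAt f 0 t) : ∃ C, ∀ t ∈ s, f t = C :=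
  hs.exists_is_const_of_deriv_eq_zero hs'
    (fun t ht => (hf t ht).differentiableAt.differentiableWithinAt) fun t ht => (hf t ht).deriv

theorem HasDerivAt.riccati_complete_square {ψ : ℝ → ℝ} {a b D t : ℝ} (ha : a ≠ 0) (hD : D ≠ 0)
    (h : HasDerivAt ψ (a * ψ t ^ 2 + b * ψ t + (b ^ 2 / (4 * a) + a * D ^ 2)) t) :
    HasDerivAt (fun s => (ψ s + b / (2 * a)) / D)
      (a * D * (1 + ((ψ t + b / (2 * a)) / D) ^ 2)) t := by
  refine ((h.add_const (b / (2 * a))).div_const D).congr_deriv ?_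
  field_simp
  ring

theorem IsOpen.exists_arctan_eq_of_hasDerivAt {s : Set ℝ} {v : ℝ → ℝ} {k : ℝ} (hs : IsOpen s)
    (hs' : IsPreconnected s) (hv : ∀ t ∈ s, HasDerivAt v (k * (1 + v t ^ 2)) t) :
    ∃ κ, ∀ t ∈ s, arctan (v t) = k * t + κ := by
  have hderiv : ∀ t ∈ s, HasDerivAt (fun t => arctan (v t) - k * t) 0 t := by
    intro t ht
    have hpos : 0 < 1 + v t ^ 2 := by positivity
    refine (((hasDerivAt_arctan (v t)).comp t (hv t ht)).sub
      ((hasDerivAt_id t).const_mul k)).congr_deriv ?_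
    field_simp
    ring
  obtain ⟨κ, hκ⟩ := hs.exists_eq_const_of_hasDerivAt_zero hs' hderiv
  exact ⟨κ, fun t ht => by linarith [hκ t ht]⟩

theorem IsOpen.exists_eq_tan_of_hasDerivAt {s : Set ℝ} {v : ℝ → ℝ} {k : ℝ} (hs : IsOpen s)
    (hs' : IsPreconnected s) (hv : ∀ t ∈ s, HasDerivAt v (k * (1 + v t ^ 2)) t) :
    ∃ κ, ∀ t ∈ s, 0 < cos (k * t + κ) ∧ v t = tan (k * t + κ) := by
  obtain ⟨κ, hκ⟩ := hs.exists_arctan_eq_of_hasDerivAt hs' hv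
  refine ⟨κ, fun t ht => ?_⟩
  rw [← hκ t ht, cos_arctan, tan_arctan]
  exact ⟨by positivity, rfl⟩

theorem hasDerivAt_log_abs_cos_affine {k κ t : ℝ} (h : cos (k * t + κ) ≠ 0) :
    HasDerivAt (fun t => log |cos (k * t + κ)|) (-k * tan (k * t + κ)) t := by
  simp only [log_abs]
  have hlin : HasDerivAt (fun t => k * t + κ) k t := by
    simpa using ((hasDerivAt_id t).const_mul k).add_const κ
  refine ((hasDerivAt_log h).comp t ((hasDerivAt_cos _).comp t hlin)).congr_deriv ?_
  rw [tan_eq_sin_div_cos]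
  field_simp

theorem stmt_12_general (a b D : ℝ) (ha : a ≠ 0) (hD : 0 < D)
    (c : ℝ) (hc : c = b ^ 2 / (4 * a) + a * D ^ 2)
    (I : Set ℝ) (hIab : ∃ x y : ℝ, I = Set.Ioo x y)
    (Φ : ℝ → ℝ)
    (hΦ₁ : ∀ t ∈ I, DifferentiableAt ℝ Φ t)
    (hΦ₂ : ∀ t ∈ I, DifferentiableAt ℝ (deriv Φ) t)
    (hode : ∀ t ∈ I, deriv (deriv Φ) t = a * (deriv Φ t) ^ 2 + b * deriv Φ t + c) :
    ∃ κ μ : ℝ, ∀ t ∈ I,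
      Real.cos (a * D * t + κ) ≠ 0 ∧
      Φ t = -(1 / a) * Real.log |Real.cos (a * D * t + κ)| - (b / (2 * a)) * t + μ := by
  obtain ⟨x, y, rfl⟩ := hIab
  have hv : ∀ t ∈ Ioo x y, HasDerivAt (fun s => (deriv Φ s + b / (2 * a)) / D)
      (a * D * (1 + ((deriv Φ t + b / (2 * a)) / D) ^ 2)) t := fun t ht =>
    HasDerivAt.riccati_complete_square ha hD.ne' (hc ▸ hode t ht ▸ (hΦ₂ t ht).hasDerivAt)
  obtain ⟨κ, hκ⟩ := isOpen_Ioo.exists_eq_tan_of_hasDerivAt isPreconnected_Ioo hv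
  have hderiv : ∀ t ∈ Ioo x y, HasDerivAt
      (fun t => Φ t + (1 / a) * log |cos (a * D * t + κ)| + b / (2 * a) * t) 0 t := by
    intro t ht
    obtain ⟨hcos, htan⟩ := hκ t ht
    refine ((((hΦ₁ t ht).hasDerivAt.add
      ((hasDerivAt_log_abs_cos_affine hcos.ne').const_mul (1 / a))).add
      ((hasDerivAt_id t).const_mul (b / (2 * a))))).congr_deriv ?_
    rw [← htan]
    field_simp
    ring
  obtain ⟨μ, hμ⟩ := isOpen_Ioo.exists_eq_const_of_hasDerivAt_zero isPreconnected_Ioo hderiv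
  exact ⟨κ, μ, fun t ht => ⟨(hκ t ht).1.ne', by linarith [hμ t ht]⟩⟩

/-- uniqueness for Case 3: any twice differentiable solution of
`Φ'' = aΦ'² + bΦ' + c` (with `c = b²/(4a) + aD²`, `D > 0`) on a nonempty open
interval is of the Case 3 form. -/
theorem stmt_12 (a b D : ℝ) (ha : a ≠ 0) (hD : 0 < D)
    (c : ℝ) (hc : c = b ^ 2 / (4 * a) + a * D ^ 2)
    (I : Set ℝ) (hI : I.Nonempty) (hIab : ∃ x y : ℝ, I = Set.Ioo x y)
    (Φ : ℝ → ℝ)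
    (hΦ₁ : ∀ t ∈ I, DifferentiableAt ℝ Φ t)
    (hΦ₂ : ∀ t ∈ I, DifferentiableAt ℝ (deriv Φ) t)
    (hode : ∀ t ∈ I, deriv (deriv Φ) t = a * (deriv Φ t) ^ 2 + b * deriv Φ t + c) :
    ∃ κ μ : ℝ, ∀ t ∈ I,
      Real.cos (a * D * t + κ) ≠ 0 ∧
      Φ t = -(1 / a) * Real.log |Real.cos (a * D * t + κ)| - (b / (2 * a)) * t + μ :=
  stmt_12_general a b D ha hD c hc I hIab Φ hΦ₁ hΦ₂ hode
end

section
/- Let a, b, D, ξ be real numbers with a ≠ 0, D > 0, ξ > 0, and let Φ(t) = −(1/a)·( log|1 − ξ e^{2aDt}| + (b/2 − Da)·t ) on U = { t : ξ e^{2aDt} ≠ 1 }. Then Φ''(t) > 0 for all t ∈ U if and only if a > 0; indeed Φ''(t) = 4aD² ξ e^{2aDt}/(1 − ξ e^{2aDt})² has the sign of a at every t ∈ U. -/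
/-!
Writing `u = ξ e^{rt}` with `r = 2aD`, one has `u' = r u`, so
`(log |1 - u|)' = r - r / (1 - u)` and `(log |1 - u|)'' = -r² u / (1 - u)²`.
Hence `Φ'' = 4aD² u / (1 - u)²`, which is `a` times a positive number on `U`;
and `U` is nonempty because `t ↦ ξ e^{rt}` is not constant.
-/

open Real

section OneSubMulExp

variable (ξ r : ℝ)

lemma hasDerivAt_mul_exp_mul (t : ℝ) :
    HasDerivAt (fun t => ξ * exp (r * t)) (r * (ξ * exp (r * t))) t := by
  have h := (((hasDerivAt_id t).const_mul r).exp).const_mul ξ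
  simp only [id, mul_one] at h
  exact h.congr_deriv (by ring)

lemma isOpen_setOf_mul_exp_mul_ne_one : IsOpen {t : ℝ | ξ * exp (r * t) ≠ 1} :=
  isOpen_ne_fun (by fun_prop) continuous_const

lemma exists_mul_exp_mul_ne_one (hr : r ≠ 0) : ∃ t, ξ * exp (r * t) ≠ 1 := by
  by_contra! h
  have hξ : ξ = 1 := by simpa using h 0
  have he : exp 1 = 1 := by simpa [hξ, hr] using h r⁻¹
  exact one_ne_zero (exp_eq_one_iff 1 |>.mp he)

variable {ξ r}

lemma hasDerivAt_log_abs_one_sub_mul_exp_mul {t : ℝ} (ht : ξ * exp (r * t) ≠ 1) :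
    HasDerivAt (fun t => log |1 - ξ * exp (r * t)|)
      (r - r / (1 - ξ * exp (r * t))) t := by
  have hne : 1 - ξ * exp (r * t) ≠ 0 := sub_ne_zero.mpr ht.symm
  simp only [log_abs]
  convert ((hasDerivAt_mul_exp_mul ξ r t).const_sub 1).log hne using 1
  field_simp
  ring

lemma hasDerivAt_div_one_sub_mul_exp_mul {t : ℝ} (ht : ξ * exp (r * t) ≠ 1) :
    HasDerivAt (fun t => r / (1 - ξ * exp (r * t)))
      (r ^ 2 * (ξ * exp (r * t)) / (1 - ξ * exp (r * t)) ^ 2) t := by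
  have hne : 1 - ξ * exp (r * t) ≠ 0 := sub_ne_zero.mpr ht.symm
  have h := (hasDerivAt_const t r).div ((hasDerivAt_mul_exp_mul ξ r t).const_sub 1) hne
  exact h.congr_deriv (by ring)

lemma deriv_deriv_mul_log_abs_one_sub_mul_exp_mul_add (c k : ℝ) {t : ℝ}
    (ht : ξ * exp (r * t) ≠ 1) :
    deriv (deriv fun t => c * (log |1 - ξ * exp (r * t)| + k * t)) t
      = -(c * (r ^ 2 * (ξ * exp (r * t)) / (1 - ξ * exp (r * t)) ^ 2)) := by
  have hderiv : deriv (fun t => c * (log |1 - ξ * exp (r * t)| + k * t))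
      =ᶠ[nhds t] fun t => c * (r - r / (1 - ξ * exp (r * t)) + k) := by
    filter_upwards [(isOpen_setOf_mul_exp_mul_ne_one ξ r).mem_nhds ht] with s hs
    exact (((hasDerivAt_log_abs_one_sub_mul_exp_mul hs).add
      ((hasDerivAt_id s).const_mul k)).const_mul c).deriv.trans (by simp)
  rw [hderiv.deriv_eq]
  have h := (((hasDerivAt_div_one_sub_mul_exp_mul ht).const_sub r).add_const k).const_mul c
  exact h.deriv.trans (by ring)

end OneSubMulExp

/-- positivity analysis for the Case 1b solution: `Φ'' > 0` on all
of `U = {t : ξe^{2aDt} ≠ 1}` iff `a > 0`; indeed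
`Φ''(t) = 4aD²ξe^{2aDt}/(1 − ξe^{2aDt})²` has the sign of `a` at every `t ∈ U`. -/
theorem stmt_14 (a b D ξ : ℝ) (ha : a ≠ 0) (hD : 0 < D) (hξ : 0 < ξ)
    (U : Set ℝ) (hU : U = {t : ℝ | ξ * Real.exp (2 * a * D * t) ≠ 1})
    (Φ : ℝ → ℝ)
    (hΦ : Φ = fun t : ℝ =>
      -(1 / a) * (Real.log |1 - ξ * Real.exp (2 * a * D * t)| + (b / 2 - D * a) * t)) :
    (∀ t ∈ U,
        deriv (deriv Φ) t
          = 4 * a * D ^ 2 * ξ * Real.exp (2 * a * D * t)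
              / (1 - ξ * Real.exp (2 * a * D * t)) ^ 2) ∧
    (∀ t ∈ U, (0 < deriv (deriv Φ) t ↔ 0 < a) ∧ (deriv (deriv Φ) t < 0 ↔ a < 0)) ∧
    ((∀ t ∈ U, 0 < deriv (deriv Φ) t) ↔ 0 < a) := by
  subst hU
  have hΦ'' : ∀ t, ξ * exp (2 * a * D * t) ≠ 1 →
      deriv (deriv Φ) t = 4 * a * D ^ 2 * ξ * exp (2 * a * D * t)
        / (1 - ξ * exp (2 * a * D * t)) ^ 2 := by
    intro t ht
    rw [hΦ, deriv_deriv_mul_log_abs_one_sub_mul_exp_mul_add _ _ ht]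
    field_simp
    norm_num
  have hsign : ∀ t, ξ * exp (2 * a * D * t) ≠ 1 →
      (0 < deriv (deriv Φ) t ↔ 0 < a) ∧ (deriv (deriv Φ) t < 0 ↔ a < 0) := by
    intro t ht
    have hden : 1 - ξ * exp (2 * a * D * t) ≠ 0 := sub_ne_zero.mpr ht.symm
    have hpos : 0 < 4 * D ^ 2 * ξ * exp (2 * a * D * t) / (1 - ξ * exp (2 * a * D * t)) ^ 2 := by
      positivity
    have hfactor : deriv (deriv Φ) t
        = a * (4 * D ^ 2 * ξ * exp (2 * a * D * t) / (1 - ξ * exp (2 * a * D * t)) ^ 2) := by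
      rw [hΦ'' t ht]; ring
    rw [hfactor]
    refine ⟨mul_pos_iff_of_pos_right hpos, ?_⟩
    rw [← neg_pos, ← neg_mul, mul_pos_iff_of_pos_right hpos, neg_pos]
  refine ⟨hΦ'', hsign, fun hall => ?_, fun ha' t ht => (hsign t ht).1.mpr ha'⟩
  obtain ⟨t, ht⟩ := exists_mul_exp_mul_ne_one ξ (2 * a * D) (by positivity)
  exact (hsign t ht).1.mp (hall t ht)
end
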